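/- arXiv:2602.11755 — 2 statements merged into one kernel-verified Lean document; each statement's English description precedes it below -/
import Mathlib

section
/- For every real number a > 1, the function d_a(m, n) = log_a(max(q_n(m), q_m(n))) is a metric on the set X of pairs of coprime natural numbers: it is nonnegative, d_a(m, n) = 0 if and only if m = n, it is symmetric, and it satisfies the triangle inequality d_a(k, n) ≤ d_a(k, m) + d_a(m, n). -/
/-- `q n₁ n₂ m` is the minimum of `|x| + |y|` over integer solutions of `m = n₁·x + n₂·y`. -/
noncomputable def q (n₁ n₂ m : ℕ) : ℕ :=
  sInf {s : ℕ | ∃ x y : ℤ, (m : ℤ) = (n₁ : ℤ) * x + (n₂ : ℤ) * y ∧ s = x.natAbs + y.natAbs}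

/-- `qPair n₁ n₂ m₁ m₂ = max (q_{n}(m₁)) (q_{n}(m₂))` for pairs `n = {n₁,n₂}`, `m = {m₁,m₂}`. -/
noncomputable def qPair (n₁ n₂ m₁ m₂ : ℕ) : ℕ := max (q n₁ n₂ m₁) (q n₁ n₂ m₂)

/-- `dA a m₁ m₂ n₁ n₂ = log_a (max (q_n(m), q_m(n)))`. -/
noncomputable def dA (a : ℝ) (m₁ m₂ n₁ n₂ : ℕ) : ℝ :=
  Real.logb a (max (qPair n₁ n₂ m₁ m₂) (qPair m₁ m₂ n₁ n₂))

lemma q_le {n₁ n₂ m : ℕ} {x y : ℤ} (h : (m : ℤ) = (n₁ : ℤ) * x + (n₂ : ℤ) * y) :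
    q n₁ n₂ m ≤ x.natAbs + y.natAbs :=
  Nat.sInf_le ⟨x, y, h, rfl⟩

lemma q_spec {n₁ n₂ : ℕ} (h : Nat.Coprime n₁ n₂) (m : ℕ) :
    ∃ x y : ℤ, (m : ℤ) = (n₁ : ℤ) * x + (n₂ : ℤ) * y ∧ q n₁ n₂ m = x.natAbs + y.natAbs := by
  have hb : (1 : ℤ) = (n₁ : ℤ) * Int.gcdA n₁ n₂ + (n₂ : ℤ) * Int.gcdB n₁ n₂ := by
    have h2 := Int.gcd_eq_gcd_ab (n₁ : ℤ) (n₂ : ℤ)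
    have h3 : Int.gcd (n₁ : ℤ) (n₂ : ℤ) = 1 := by
      rw [Int.gcd_natCast_natCast]; exact h
    rw [h3] at h2
    exact_mod_cast h2
  have hne : {s : ℕ | ∃ x y : ℤ, (m : ℤ) = (n₁ : ℤ) * x + (n₂ : ℤ) * y ∧
      s = x.natAbs + y.natAbs}.Nonempty :=
    ⟨_, m * Int.gcdA n₁ n₂, m * Int.gcdB n₁ n₂, by linear_combination (m : ℤ) * hb, rfl⟩
  exact Nat.sInf_mem hne

lemma one_le_q {n₁ n₂ : ℕ} (h : Nat.Coprime n₁ n₂) {m : ℕ} (hm : 0 < m) :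
    1 ≤ q n₁ n₂ m := by
  obtain ⟨x, y, hxy, hs⟩ := q_spec h m
  rcases Nat.eq_zero_or_pos (q n₁ n₂ m) with h0 | h1
  · exfalso
    rw [h0] at hs
    have hx : x = 0 := Int.natAbs_eq_zero.mp (by omega)
    have hy : y = 0 := Int.natAbs_eq_zero.mp (by omega)
    rw [hx, hy] at hxy
    simp at hxy
    omega
  · exact h1

lemma q_eq_one_iff {n₁ n₂ : ℕ} (h : Nat.Coprime n₁ n₂) {m : ℕ} (hm : 0 < m)
    (hn₁ : 0 < n₁) (hn₂ : 0 < n₂) :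
    q n₁ n₂ m = 1 ↔ m = n₁ ∨ m = n₂ := by
  constructor
  · intro h1
    obtain ⟨x, y, hxy, hs⟩ := q_spec h m
    rw [h1] at hs
    have hcases : (x.natAbs = 1 ∧ y.natAbs = 0) ∨ (x.natAbs = 0 ∧ y.natAbs = 1) := by omega
    rcases hcases with ⟨hx1, hy0⟩ | ⟨hx0, hy1⟩
    · have hy : y = 0 := Int.natAbs_eq_zero.mp hy0
      rcases Int.natAbs_eq_iff.mp hx1 with hx | hx <;> rw [hx, hy] at hxy <;>
        push_cast at hxy <;> omega
    · have hx : x = 0 := Int.natAbs_eq_zero.mp hx0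
      rcases Int.natAbs_eq_iff.mp hy1 with hy | hy <;> rw [hx, hy] at hxy <;>
        push_cast at hxy <;> omega
  · intro hor
    have hle : q n₁ n₂ m ≤ 1 := by
      rcases hor with rfl | rfl
      · have := q_le (n₁ := m) (n₂ := n₂) (m := m) (x := 1) (y := 0) (by push_cast; ring)
        simpa using this
      · have := q_le (n₁ := n₁) (n₂ := m) (m := m) (x := 0) (y := 1) (by push_cast; ring)
        simpa using this
    have := one_le_q h hm
    omega

lemma q_trans {k₁ k₂ m₁ m₂ : ℕ} (hk : Nat.Coprime k₁ k₂) (hm : Nat.Coprime m₁ m₂) (n : ℕ) :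
    q k₁ k₂ n ≤ max (q k₁ k₂ m₁) (q k₁ k₂ m₂) * q m₁ m₂ n := by
  obtain ⟨x, y, hxy, hq⟩ := q_spec hm n
  obtain ⟨u₁, v₁, h1, e1⟩ := q_spec hk m₁
  obtain ⟨u₂, v₂, h2, e2⟩ := q_spec hk m₂
  set M := max (q k₁ k₂ m₁) (q k₁ k₂ m₂) with hM
  have key : (n : ℤ) = (k₁ : ℤ) * (u₁ * x + u₂ * y) + (k₂ : ℤ) * (v₁ * x + v₂ * y) := by
    rw [hxy, h1, h2]; ring
  calc q k₁ k₂ n ≤ (u₁ * x + u₂ * y).natAbs + (v₁ * x + v₂ * y).natAbs := q_le key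
    _ ≤ (u₁.natAbs + v₁.natAbs) * x.natAbs + (u₂.natAbs + v₂.natAbs) * y.natAbs := by
        have a1 := Int.natAbs_add_le (u₁ * x) (u₂ * y)
        have a2 := Int.natAbs_add_le (v₁ * x) (v₂ * y)
        rw [Int.natAbs_mul, Int.natAbs_mul] at a1 a2
        nlinarith [a1, a2]
    _ ≤ M * x.natAbs + M * y.natAbs := by
        have b1 : u₁.natAbs + v₁.natAbs ≤ M := by rw [hM, ← e1]; exact le_max_left _ _
        have b2 : u₂.natAbs + v₂.natAbs ≤ M := by rw [hM, ← e2]; exact le_max_right _ _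
        exact Nat.add_le_add (Nat.mul_le_mul_right _ b1) (Nat.mul_le_mul_right _ b2)
    _ = M * (x.natAbs + y.natAbs) := (Nat.mul_add _ _ _).symm
    _ = M * q m₁ m₂ n := by rw [hq]

lemma qPair_trans {k₁ k₂ m₁ m₂ n₁ n₂ : ℕ}
    (hk : Nat.Coprime k₁ k₂) (hm : Nat.Coprime m₁ m₂) :
    qPair k₁ k₂ n₁ n₂ ≤ qPair k₁ k₂ m₁ m₂ * qPair m₁ m₂ n₁ n₂ := by
  unfold qPair
  apply max_le
  · exact le_trans (q_trans hk hm n₁) (Nat.mul_le_mul_left _ (le_max_left _ _))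
  · exact le_trans (q_trans hk hm n₂) (Nat.mul_le_mul_left _ (le_max_right _ _))

lemma one_le_qPair {n₁ n₂ m₁ m₂ : ℕ} (h : Nat.Coprime n₁ n₂) (hm₁ : 0 < m₁) :
    1 ≤ qPair n₁ n₂ m₁ m₂ :=
  le_trans (one_le_q h hm₁) (le_max_left _ _)

/-- For every `a > 1`, `dA a` is a metric on the set of pairs of coprime natural numbers:
nonnegative, zero exactly on equal (unordered) pairs, symmetric, and satisfying the
triangle inequality. -/
theorem stmt_1 (a : ℝ) (ha : 1 < a) :
    (∀ m₁ m₂ n₁ n₂ : ℕ, 0 < m₁ → 0 < m₂ → 0 < n₁ → 0 < n₂ →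
      Nat.Coprime m₁ m₂ → Nat.Coprime n₁ n₂ →
      0 ≤ dA a m₁ m₂ n₁ n₂) ∧
    (∀ m₁ m₂ n₁ n₂ : ℕ, 0 < m₁ → 0 < m₂ → 0 < n₁ → 0 < n₂ →
      Nat.Coprime m₁ m₂ → Nat.Coprime n₁ n₂ →
      (dA a m₁ m₂ n₁ n₂ = 0 ↔ ({m₁, m₂} : Set ℕ) = ({n₁, n₂} : Set ℕ))) ∧
    (∀ m₁ m₂ n₁ n₂ : ℕ, 0 < m₁ → 0 < m₂ → 0 < n₁ → 0 < n₂ →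
      Nat.Coprime m₁ m₂ → Nat.Coprime n₁ n₂ →
      dA a m₁ m₂ n₁ n₂ = dA a n₁ n₂ m₁ m₂) ∧
    (∀ k₁ k₂ m₁ m₂ n₁ n₂ : ℕ, 0 < k₁ → 0 < k₂ → 0 < m₁ → 0 < m₂ → 0 < n₁ → 0 < n₂ →
      Nat.Coprime k₁ k₂ → Nat.Coprime m₁ m₂ → Nat.Coprime n₁ n₂ →
      dA a k₁ k₂ n₁ n₂ ≤ dA a k₁ k₂ m₁ m₂ + dA a m₁ m₂ n₁ n₂) := by
  have hdA : ∀ m₁ m₂ n₁ n₂ : ℕ,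
      dA a m₁ m₂ n₁ n₂ =
        Real.logb a ((max (qPair n₁ n₂ m₁ m₂) (qPair m₁ m₂ n₁ n₂) : ℕ) : ℝ) := by
    intro m₁ m₂ n₁ n₂
    unfold dA
    rw [Nat.cast_max]
  have hone : ∀ m₁ m₂ n₁ n₂ : ℕ, 0 < m₁ → 0 < n₁ →
      Nat.Coprime m₁ m₂ → Nat.Coprime n₁ n₂ →
      1 ≤ max (qPair n₁ n₂ m₁ m₂) (qPair m₁ m₂ n₁ n₂) := by
    intro m₁ m₂ n₁ n₂ hm₁ hn₁ hm hn
    exact le_trans (one_le_qPair hn hm₁) (le_max_left _ _)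
  refine ⟨?_, ?_, ?_, ?_⟩
  · intro m₁ m₂ n₁ n₂ hm₁ hm₂ hn₁ hn₂ hm hn
    rw [hdA]
    apply Real.logb_nonneg ha
    exact_mod_cast hone m₁ m₂ n₁ n₂ hm₁ hn₁ hm hn
  · intro m₁ m₂ n₁ n₂ hm₁ hm₂ hn₁ hn₂ hm hn
    rw [hdA]
    have h1 := hone m₁ m₂ n₁ n₂ hm₁ hn₁ hm hn
    have h1' : (1 : ℝ) ≤ ((max (qPair n₁ n₂ m₁ m₂) (qPair m₁ m₂ n₁ n₂) : ℕ) : ℝ) := by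
      exact_mod_cast h1
    constructor
    · intro h0
      have hx : ((max (qPair n₁ n₂ m₁ m₂) (qPair m₁ m₂ n₁ n₂) : ℕ) : ℝ) = 1 := by
        rcases Real.logb_eq_zero.mp h0 with h | h | h | h | h | h
        · linarith
        · linarith
        · linarith
        · linarith
        · exact h
        · linarith
      have hN : max (qPair n₁ n₂ m₁ m₂) (qPair m₁ m₂ n₁ n₂) = 1 := by exact_mod_cast hx
      have hq1 : qPair n₁ n₂ m₁ m₂ = 1 := by
        have h2 := le_max_left (qPair n₁ n₂ m₁ m₂) (qPair m₁ m₂ n₁ n₂)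
        have h3 := one_le_qPair hn (m₂ := m₂) hm₁
        omega
      have hq2 : qPair m₁ m₂ n₁ n₂ = 1 := by
        have h2 := le_max_right (qPair n₁ n₂ m₁ m₂) (qPair m₁ m₂ n₁ n₂)
        have h3 := one_le_qPair hm (m₂ := n₂) hn₁
        omega
      have e1 : q n₁ n₂ m₁ = 1 := by
        have g1 := one_le_q hn hm₁; have g2 := one_le_q hn hm₂
        unfold qPair at hq1; omega
      have e2 : q n₁ n₂ m₂ = 1 := by
        have g1 := one_le_q hn hm₁; have g2 := one_le_q hn hm₂
        unfold qPair at hq1; omega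
      have e3 : q m₁ m₂ n₁ = 1 := by
        have g1 := one_le_q hm hn₁; have g2 := one_le_q hm hn₂
        unfold qPair at hq2; omega
      have e4 : q m₁ m₂ n₂ = 1 := by
        have g1 := one_le_q hm hn₁; have g2 := one_le_q hm hn₂
        unfold qPair at hq2; omega
      have c1 := (q_eq_one_iff hn hm₁ hn₁ hn₂).mp e1
      have c2 := (q_eq_one_iff hn hm₂ hn₁ hn₂).mp e2
      have c3 := (q_eq_one_iff hm hn₁ hm₁ hm₂).mp e3
      have c4 := (q_eq_one_iff hm hn₂ hm₁ hm₂).mp e4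
      ext x
      simp only [Set.mem_insert_iff, Set.mem_singleton_iff]
      constructor <;> rintro (rfl | rfl) <;> tauto
    · intro hset
      have hm1 : m₁ = n₁ ∨ m₁ = n₂ := by
        have : m₁ ∈ ({n₁, n₂} : Set ℕ) := hset ▸ (by simp : m₁ ∈ ({m₁, m₂} : Set ℕ))
        simpa using this
      have hm2 : m₂ = n₁ ∨ m₂ = n₂ := by
        have : m₂ ∈ ({n₁, n₂} : Set ℕ) := hset ▸ (by simp : m₂ ∈ ({m₁, m₂} : Set ℕ))
        simpa using this
      have hn1 : n₁ = m₁ ∨ n₁ = m₂ := by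
        have : n₁ ∈ ({m₁, m₂} : Set ℕ) := hset.symm ▸ (by simp : n₁ ∈ ({n₁, n₂} : Set ℕ))
        simpa using this
      have hn2 : n₂ = m₁ ∨ n₂ = m₂ := by
        have : n₂ ∈ ({m₁, m₂} : Set ℕ) := hset.symm ▸ (by simp : n₂ ∈ ({n₁, n₂} : Set ℕ))
        simpa using this
      have e1 := (q_eq_one_iff hn hm₁ hn₁ hn₂).mpr hm1
      have e2 := (q_eq_one_iff hn hm₂ hn₁ hn₂).mpr hm2
      have e3 := (q_eq_one_iff hm hn₁ hm₁ hm₂).mpr hn1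
      have e4 := (q_eq_one_iff hm hn₂ hm₁ hm₂).mpr hn2
      have hN : max (qPair n₁ n₂ m₁ m₂) (qPair m₁ m₂ n₁ n₂) = 1 := by
        unfold qPair; omega
      rw [hN]
      simp
  · intro m₁ m₂ n₁ n₂ _ _ _ _ _ _
    unfold dA
    rw [max_comm]
  · intro k₁ k₂ m₁ m₂ n₁ n₂ hk₁ hk₂ hm₁ hm₂ hn₁ hn₂ hk hm hn
    rw [hdA, hdA, hdA]
    set A := max (qPair n₁ n₂ k₁ k₂) (qPair k₁ k₂ n₁ n₂) with hA
    set B := max (qPair m₁ m₂ k₁ k₂) (qPair k₁ k₂ m₁ m₂) with hB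
    set C := max (qPair n₁ n₂ m₁ m₂) (qPair m₁ m₂ n₁ n₂) with hC
    have hB1 : 1 ≤ B := le_trans (one_le_qPair hm hk₁) (le_max_left _ _)
    have hC1 : 1 ≤ C := le_trans (one_le_qPair hn hm₁) (le_max_left _ _)
    have hABC : A ≤ B * C := by
      rw [hA]
      apply max_le
      · calc qPair n₁ n₂ k₁ k₂ ≤ qPair n₁ n₂ m₁ m₂ * qPair m₁ m₂ k₁ k₂ := qPair_trans hn hm
          _ ≤ C * B := Nat.mul_le_mul (le_max_left _ _) (le_max_left _ _)
          _ = B * C := Nat.mul_comm _ _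
      · calc qPair k₁ k₂ n₁ n₂ ≤ qPair k₁ k₂ m₁ m₂ * qPair m₁ m₂ n₁ n₂ := qPair_trans hk hm
          _ ≤ B * C := Nat.mul_le_mul (le_max_right _ _) (le_max_right _ _)
    have hB0 : (0 : ℝ) < (B : ℝ) := by exact_mod_cast hB1
    have hC0 : (0 : ℝ) < (C : ℝ) := by exact_mod_cast hC1
    calc Real.logb a (A : ℝ) ≤ Real.logb a ((B : ℝ) * (C : ℝ)) := by
          have hA1 : 1 ≤ A := by
            rw [hA]; exact le_trans (one_le_qPair hn hk₁) (le_max_left _ _)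
          have hA0 : (0 : ℝ) < (A : ℝ) := by exact_mod_cast hA1
          exact Real.logb_le_logb_of_le ha hA0 (by exact_mod_cast hABC)
      _ = Real.logb a (B : ℝ) + Real.logb a (C : ℝ) := Real.logb_mul (ne_of_gt hB0) (ne_of_gt hC0)
end

section
/- (Main Theorem) The map n ↦ f_n = {F_n, F_{n+1}} from (ℕ, |·|) to (X, d_φ) is a (1,1)-quasi-isometric embedding: for all natural numbers m, n ≥ 1, |m - n| - 1 ≤ d_φ(f_m, f_n) ≤ |m - n| + 1. -/
open Nat (fib)
open Real goldenRatio

lemma Int.natAbs_fib (e : ℤ) : (Int.fib e).natAbs = Nat.fib e.natAbs := by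
  obtain ⟨a, rfl | rfl⟩ := Int.eq_nat_or_neg e <;>
    simp [Int.fib_neg_natCast, Int.natAbs_mul]

-- Binet: `φ ^ k = F (k + 1) + (φ - 1) * F k`, and `0 < φ - 1 < 1`.
lemma fib_add_one_le_goldenRatio_pow (k : ℕ) : (fib (k + 1) : ℝ) ≤ φ ^ k := by
  have h := fib_succ_sub_goldenConj_mul_fib k
  rw [← one_sub_goldenConj] at h
  nlinarith [one_lt_goldenRatio, (Nat.cast_nonneg (fib k) : (0 : ℝ) ≤ _)]

lemma goldenRatio_pow_le_fib_add_two (k : ℕ) : φ ^ k ≤ fib (k + 2) := by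
  have h := fib_succ_sub_goldenConj_mul_fib k
  rw [← one_sub_goldenConj] at h
  rw [Nat.fib_add_two]; push_cast
  nlinarith [goldenRatio_lt_two, (Nat.cast_nonneg (fib k) : (0 : ℝ) ≤ _)]

lemma q_le_natAbs_add_natAbs {n₁ n₂ m : ℕ} {x y : ℤ} (h : (m : ℤ) = n₁ * x + n₂ * y) :
    q n₁ n₂ m ≤ x.natAbs + y.natAbs :=
  Nat.sInf_le ⟨x, y, h, rfl⟩

lemma le_max_mul_q {n₁ n₂ m : ℕ} {x y : ℤ} (h : (m : ℤ) = n₁ * x + n₂ * y) :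
    m ≤ max n₁ n₂ * q n₁ n₂ m := by
  obtain ⟨x', y', h', hq⟩ : q n₁ n₂ m ∈ {s : ℕ | ∃ x y : ℤ,
      (m : ℤ) = n₁ * x + n₂ * y ∧ s = x.natAbs + y.natAbs} :=
    Nat.sInf_mem ⟨_, x, y, h, rfl⟩
  rw [hq]; zify; rw [h']
  calc (n₁ : ℤ) * x' + n₂ * y' ≤ n₁ * |x'| + n₂ * |y'| := by
        gcongr <;> exact le_abs_self _
    _ ≤ max n₁ n₂ * |x'| + max n₁ n₂ * |y'| := by gcongr <;> simp
    _ = _ := by push_cast; ring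

-- Through `Int.fib`, one formula covers `m ≤ n` as well, where it is d'Ocagne's identity.
lemma fib_eq_fib_mul_add_fib_add_one_mul (n m : ℕ) :
    (fib m : ℤ) = fib n * Int.fib (m - n - 1) + fib (n + 1) * Int.fib (m - n) := by
  have := Int.fib_add (n + 1) (m - n - 1)
  rw [show (n : ℤ) + 1 + (m - n - 1) = m by ring, add_sub_cancel_right, sub_add_cancel] at this
  exact_mod_cast this

lemma q_fib_le_fib {n m k : ℕ} (h₁ : m ≤ n + k + 1) (h₂ : n ≤ m + k) :
    q (fib n) (fib (n + 1)) (fib m) ≤ fib (k + 2) := by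
  calc q (fib n) (fib (n + 1)) (fib m)
      ≤ (Int.fib (m - n - 1)).natAbs + (Int.fib (m - n)).natAbs :=
        q_le_natAbs_add_natAbs (fib_eq_fib_mul_add_fib_add_one_mul n m)
    _ = fib (m - n - 1 : ℤ).natAbs + fib (m - n : ℤ).natAbs := by simp only [Int.natAbs_fib]
    _ ≤ fib (k + 2) := by
      obtain ⟨j, hj⟩ | ⟨j, hj⟩ : (∃ j, m = n + j + 1) ∨ ∃ j, n = m + j :=
        (lt_or_ge n m).imp Nat.exists_eq_add_of_lt Nat.exists_eq_add_of_le
      · rw [show (m - n - 1 : ℤ).natAbs = j by omega, show (m - n : ℤ).natAbs = j + 1 by omega,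
          ← Nat.fib_add_two]
        exact Nat.fib_mono (by omega)
      · rw [show (m - n - 1 : ℤ).natAbs = j + 1 by omega, show (m - n : ℤ).natAbs = j by omega,
          add_comm, ← Nat.fib_add_two]
        exact Nat.fib_mono (by omega)

lemma qPair_fib_le_fib {n m k : ℕ} (h₁ : m ≤ n + k) (h₂ : n ≤ m + k) :
    qPair (fib n) (fib (n + 1)) (fib m) (fib (m + 1)) ≤ fib (k + 2) :=
  max_le (q_fib_le_fib (by omega) h₂) (q_fib_le_fib (by omega) (by omega))

lemma goldenRatio_pow_le_mul_q {n : ℕ} (hn : n ≠ 0) (k : ℕ) :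
    φ ^ k ≤ φ * q (fib n) (fib (n + 1)) (fib (n + k + 1)) := by
  obtain ⟨n, rfl⟩ : ∃ n', n = n' + 1 := ⟨n - 1, by omega⟩
  rw [show n + 1 + k + 1 = n + k + 2 by omega]
  set Q := q (fib (n + 1)) (fib (n + 2)) (fib (n + k + 2))
  have hfib : fib (n + k + 2) ≤ fib (n + 2) * Q := by
    simpa [max_eq_right (Nat.fib_mono (Nat.le_succ (n + 1)))] using
      le_max_mul_q (fib_eq_fib_mul_add_fib_add_one_mul (n + 1) (n + k + 2))
  have : φ ^ n * φ ^ k ≤ φ ^ n * (φ * Q) :=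
    calc φ ^ n * φ ^ k = φ ^ (n + k) := (pow_add _ _ _).symm
      _ ≤ fib (n + k + 2) := goldenRatio_pow_le_fib_add_two _
      _ ≤ fib (n + 2) * Q := by exact_mod_cast hfib
      _ ≤ φ ^ (n + 1) * Q := by gcongr; exact fib_add_one_le_goldenRatio_pow _
      _ = φ ^ n * (φ * Q) := by ring
  exact le_of_mul_le_mul_left this (by positivity)

lemma sub_one_le_logb_and_logb_le_add_one {b x : ℝ} (hb : 1 < b) {k : ℕ} (hlow : b ^ k ≤ b * x)
    (hup : x ≤ b ^ (k + 1)) : (k : ℝ) - 1 ≤ logb b x ∧ logb b x ≤ k + 1 := by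
  have hx : 0 < x := pos_of_mul_pos_right ((pow_pos (by linarith) k).trans_le hlow) (by linarith)
  have hlogb_pow (j : ℕ) : logb b (b ^ j) = j := by
    rw [logb_pow, logb_self_eq_one hb, mul_one]
  constructor
  · have := logb_le_logb_of_le hb (by positivity) hlow
    rw [hlogb_pow, logb_mul (by linarith) hx.ne', logb_self_eq_one hb] at this
    linarith
  · have := logb_le_logb_of_le hb hx hup
    rw [hlogb_pow] at this
    exact_mod_cast this

lemma dA_comm (a : ℝ) (m₁ m₂ n₁ n₂ : ℕ) : dA a m₁ m₂ n₁ n₂ = dA a n₁ n₂ m₁ m₂ := by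
  rw [dA, dA, max_comm]

/-- (Main Theorem) The map `n ↦ f_n = {F_n, F_{n+1}}` is a (1,1)-quasi-isometric embedding
of `(ℕ, |·|)` into `(𝒳, d_φ)`: for all `m, n ≥ 1`,
`|m - n| - 1 ≤ d_φ(f_m, f_n) ≤ |m - n| + 1`. -/
theorem stmt_10 (m n : ℕ) (hm : 1 ≤ m) (hn : 1 ≤ n) :
    |(m : ℝ) - n| - 1 ≤
      dA ((1 + Real.sqrt 5) / 2) (Nat.fib m) (Nat.fib (m + 1)) (Nat.fib n) (Nat.fib (n + 1)) ∧
    dA ((1 + Real.sqrt 5) / 2) (Nat.fib m) (Nat.fib (m + 1)) (Nat.fib n) (Nat.fib (n + 1)) ≤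
      |(m : ℝ) - n| + 1 := by
  wlog hnm : n ≤ m generalizing m n
  · simpa only [dA_comm, abs_sub_comm] using this n m hn hm (by omega)
  obtain ⟨k, rfl⟩ := Nat.exists_eq_add_of_le hnm
  rw [show |((n + k : ℕ) : ℝ) - n| = k by simp]
  apply sub_one_le_logb_and_logb_le_add_one one_lt_goldenRatio
  · calc φ ^ k ≤ φ * q (fib n) (fib (n + 1)) (fib (n + k + 1)) :=
          goldenRatio_pow_le_mul_q (by omega) k
      _ ≤ _ := by gcongr; exact_mod_cast le_max_of_le_left (le_max_right _ _)
  · calc _ ≤ (fib (k + 2) : ℝ) := by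
          exact_mod_cast max_le (qPair_fib_le_fib (m := n + k) (k := k) (by omega) (by omega))
            (qPair_fib_le_fib (n := n + k) (k := k) (by omega) (by omega))
      _ ≤ φ ^ (k + 1) := fib_add_one_le_goldenRatio_pow _
end
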